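/- Let (aᵢ) be a sequence in ℝ² such that for every choice of signs εᵢ ∈ {1,-1} the series ∑ εᵢ aᵢ diverges. Then ‖aᵢ‖ does not tend to 0. -/

import Mathlib

open Filter Finset Module Topology

/-!
Contrapositively, if `aᵢ → 0` then some choice of signs makes the partial sums of `∑ εᵢ aᵢ`
converge, in any real normed space of finite dimension `d`.

The key is the Bárány–Grinberg lemma: vectors of norm `≤ δ` admit signs such that every partial
sum has norm `≤ 2dδ`. One builds weights `α⁽ᵏ⁾ ∈ [-1, 1]` on the first `k` vectors with
`∑ α⁽ᵏ⁾ᵢ vᵢ = 0` and at most `d` fractional coordinates: to pass from `k` to `k + 1`, as long as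
more than `d` coordinates are fractional, the corresponding vectors are dependent and one moves
along a relation until one of them reaches `±1`. Coordinates at `±1` are never changed again, so
rounding the last weights gives signs whose `k`-th partial sum differs from `∑ α⁽ᵏ⁾ᵢ vᵢ = 0` only
in the at most `d` fractional coordinates of `α⁽ᵏ⁾`.

Applying this on consecutive blocks on which `‖aᵢ‖ ≤ 2⁻ᵏ`, the partial sums at the block ends form
a geometric Cauchy sequence, and inside block `k` they stay within `2d · 2⁻ᵏ` of it.
-/

theorem exists_abs_add_mul_eq_one {ι : Type*} (s : Finset ι) (α g : ι → ℝ)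
    (hα : ∀ i ∈ s, |α i| ≤ 1) {j : ι} (hj : j ∈ s) (hgj : g j ≠ 0) :
    ∃ t : ℝ, (∀ i ∈ s, |α i + t * g i| ≤ 1) ∧ ∃ i ∈ s, |α i + t * g i| = 1 := by
  have hs : s.Nonempty := ⟨j, hj⟩
  set f : ℝ → ℝ := fun t => s.sup' hs fun i => |α i + t * g i|
  have hf : Continuous f := Continuous.finset_sup'_apply hs fun i _ => by fun_prop
  have hf0 : f 0 ≤ 1 := Finset.sup'_le hs _ fun i hi => by simpa using hα i hi
  have hfT : 1 ≤ f (2 / g j) := by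
    refine le_trans ?_ (Finset.le_sup' (fun i => |α i + 2 / g j * g i|) hj)
    rw [div_mul_cancel₀ _ hgj]
    linarith [neg_abs_le (α j), le_abs_self (α j + 2), hα j hj]
  obtain ⟨t, -, ht⟩ := intermediate_value_uIcc hf.continuousOn (Set.mem_uIcc_of_le hf0 hfT)
  obtain ⟨i, hi, hfi⟩ := Finset.exists_mem_eq_sup' hs fun i => |α i + t * g i|
  exact ⟨t, fun i hi => ht ▸ Finset.le_sup' (fun i => |α i + t * g i|) hi, i, hi, hfi ▸ ht⟩

section

variable {E : Type*} [AddCommGroup E] [Module ℝ E] [FiniteDimensional ℝ E]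

theorem exists_card_fractional_lt {ι : Type*} (v : ι → E) (s : Finset ι) (α : ι → ℝ)
    (hα : ∀ i, |α i| ≤ 1) (hcard : finrank ℝ E < #{i ∈ s | |α i| < 1}) :
    ∃ β : ι → ℝ, (∀ i, |β i| ≤ 1) ∧ ∑ i ∈ s, β i • v i = ∑ i ∈ s, α i • v i ∧
      (∀ i, (i ∉ s ∨ |α i| = 1) → β i = α i) ∧
      #{i ∈ s | |β i| < 1} < #{i ∈ s | |α i| < 1} := by
  classical
  set F := {i ∈ s | |α i| < 1}
  obtain ⟨g, hg, j, hjF, hgj⟩ : ∃ g : ι → ℝ, ∑ i ∈ F, g i • v i = 0 ∧ ∃ j ∈ F, g j ≠ 0 := by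
    rw [← not_linearIndepOn_finset_iff]
    intro hli
    have := hli.fintype_card_le_finrank
    simp only [coe_sort_coe, Fintype.card_coe] at this
    omega
  obtain ⟨t, hβF, i₀, hi₀F, hi₀⟩ := exists_abs_add_mul_eq_one F α g (fun i _ => hα i) hjF hgj
  set β : ι → ℝ := fun i => if i ∈ F then α i + t * g i else α i
  have hβ : ∀ i, |β i| ≤ 1 := fun i => by
    by_cases hi : i ∈ F
    · simpa [β, hi] using hβF i hi
    · simpa [β, hi] using hα i
  have hsum : ∑ i ∈ s, β i • v i = ∑ i ∈ s, α i • v i := by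
    have hterm : ∀ i, β i • v i = α i • v i + if i ∈ F then t • g i • v i else 0 := fun i => by
      by_cases hi : i ∈ F <;> simp [β, hi, add_smul, mul_smul]
    rw [sum_congr rfl fun i _ => hterm i, sum_add_distrib, sum_ite_mem,
      inter_eq_right.2 (filter_subset _ _), ← smul_sum, hg, smul_zero, add_zero]
  have hfix : ∀ i, (i ∉ s ∨ |α i| = 1) → β i = α i := fun i hi => if_neg fun hiF => by
    rw [mem_filter] at hiF
    rcases hi with hi | hi
    · exact hi hiF.1
    · exact hiF.2.ne hi
  have hfrac : {i ∈ s | |β i| < 1} ⊆ F.erase i₀ := by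
    intro i hi
    rw [mem_filter] at hi
    have hiF : i ∈ F := by
      by_contra hiF
      simp only [β, if_neg hiF] at hi
      exact hiF (mem_filter.2 hi)
    refine mem_erase.2 ⟨?_, hiF⟩
    rintro rfl
    simp only [β, if_pos hiF, hi₀] at hi
    exact lt_irrefl _ hi.2
  refine ⟨β, hβ, hsum, hfix, (card_le_card hfrac).trans_lt ?_⟩
  exact card_erase_lt_of_mem hi₀F

theorem exists_card_fractional_le_finrank {ι : Type*} (v : ι → E) (s : Finset ι) (α : ι → ℝ)
    (hα : ∀ i, |α i| ≤ 1) :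
    ∃ β : ι → ℝ, (∀ i, |β i| ≤ 1) ∧ ∑ i ∈ s, β i • v i = ∑ i ∈ s, α i • v i ∧
      (∀ i, (i ∉ s ∨ |α i| = 1) → β i = α i) ∧ #{i ∈ s | |β i| < 1} ≤ finrank ℝ E := by
  induction hn : #{i ∈ s | |α i| < 1} using Nat.strong_induction_on generalizing α with
  | _ n ih =>
  by_cases hle : n ≤ finrank ℝ E
  · exact ⟨α, hα, rfl, fun _ _ => rfl, hn ▸ hle⟩
  obtain ⟨β, hβ, hsum, hfix, hlt⟩ := exists_card_fractional_lt v s α hα (by omega)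
  obtain ⟨γ, hγ, hγsum, hγfix, hγcard⟩ := ih _ (hn ▸ hlt) β hβ rfl
  refine ⟨γ, hγ, hγsum.trans hsum, fun i hi => ?_, hγcard⟩
  exact (hγfix i (hfix i hi ▸ hi)).trans (hfix i hi)

structure IsBalancedWeighting (v : ℕ → E) (k : ℕ) (α : ℕ → ℝ) : Prop where
  abs_le_one : ∀ i, |α i| ≤ 1
  eq_zero_of_le : ∀ i, k ≤ i → α i = 0
  sum_eq_zero : ∑ i ∈ range k, α i • v i = 0
  card_fractional_le : #{i ∈ range k | |α i| < 1} ≤ finrank ℝ E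

theorem IsBalancedWeighting.exists_succ {v : ℕ → E} {k : ℕ} {α : ℕ → ℝ}
    (hα : IsBalancedWeighting v k α) :
    ∃ β, IsBalancedWeighting v (k + 1) β ∧ ∀ i, |α i| = 1 → β i = α i := by
  obtain ⟨β, hβ, hsum, hfix, hcard⟩ :=
    exists_card_fractional_le_finrank v (range (k + 1)) α hα.abs_le_one
  refine ⟨β, ⟨hβ, fun i hi => ?_, ?_, hcard⟩, fun i hi => hfix i (.inr hi)⟩
  · rw [hfix i (.inl (by simpa using hi)), hα.eq_zero_of_le i (by omega)]
  · rw [hsum, sum_range_succ, hα.sum_eq_zero, hα.eq_zero_of_le k le_rfl, zero_smul, add_zero]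

theorem exists_isBalancedWeighting_chain (v : ℕ → E) (n : ℕ) :
    ∃ α, IsBalancedWeighting v n α ∧
      ∀ k ≤ n, ∃ γ, IsBalancedWeighting v k γ ∧ ∀ i, |γ i| = 1 → α i = γ i := by
  induction n with
  | zero =>
    have h0 : IsBalancedWeighting v 0 0 := ⟨by simp, fun _ _ => rfl, by simp, by simp⟩
    exact ⟨0, h0, fun k hk => ⟨0, Nat.le_zero.1 hk ▸ h0, by simp⟩⟩
  | succ n ih =>
    obtain ⟨α, hα, hchain⟩ := ih
    obtain ⟨β, hβ, hβα⟩ := hα.exists_succ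
    refine ⟨β, hβ, fun k hk => ?_⟩
    rcases Nat.le_succ_iff.1 hk with hk | rfl
    · obtain ⟨γ, hγ, hαγ⟩ := hchain k hk
      exact ⟨γ, hγ, fun i hi => (hβα i (hαγ i hi ▸ hi)).trans (hαγ i hi)⟩
    · exact ⟨β, hβ, fun _ _ => rfl⟩

end

theorem exists_signs_norm_sum_range_le {E : Type*} [NormedAddCommGroup E] [NormedSpace ℝ E]
    [FiniteDimensional ℝ E] (v : ℕ → E) (n : ℕ) {δ : ℝ} (hv : ∀ i, ‖v i‖ ≤ δ) :
    ∃ ε : ℕ → ℝ, (∀ i, ε i = 1 ∨ ε i = -1) ∧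
      ∀ k ≤ n, ‖∑ i ∈ range k, ε i • v i‖ ≤ 2 * finrank ℝ E * δ := by
  obtain ⟨α, -, hchain⟩ := exists_isBalancedWeighting_chain v n
  set ε : ℕ → ℝ := fun i => if 0 ≤ α i then 1 else -1
  have hε : ∀ i, ε i = 1 ∨ ε i = -1 := fun i => by by_cases h : 0 ≤ α i <;> simp [ε, h]
  have hεα : ∀ i, |α i| = 1 → ε i = α i := fun i hi => by
    rcases abs_eq (zero_le_one' ℝ) |>.1 hi with h | h <;> simp [ε, h]
  refine ⟨ε, hε, fun k hk => ?_⟩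
  obtain ⟨γ, hγ, hαγ⟩ := hchain k hk
  have hδ : 0 ≤ δ := (norm_nonneg _).trans (hv 0)
  set F := {i ∈ range k | |γ i| < 1}
  have hsum : ∑ i ∈ range k, ε i • v i = ∑ i ∈ F, (ε i - γ i) • v i := by
    rw [sum_filter_of_ne fun i _ hi => ?_]
    · simp only [sub_smul, sum_sub_distrib, hγ.sum_eq_zero, sub_zero]
    · refine lt_of_le_of_ne (hγ.abs_le_one i) fun h1 => hi ?_
      rw [hεα i (hαγ i h1 ▸ h1), hαγ i h1, sub_self, zero_smul]
  have hterm : ∀ i, ‖(ε i - γ i) • v i‖ ≤ 2 * δ := fun i => by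
    have hεi : |ε i| = 1 := by rcases hε i with h | h <;> simp [h]
    have : |ε i - γ i| ≤ 2 := by linarith [abs_sub (ε i) (γ i), hγ.abs_le_one i]
    rw [norm_smul, Real.norm_eq_abs]
    exact mul_le_mul this (hv i) (norm_nonneg _) zero_le_two
  calc ‖∑ i ∈ range k, ε i • v i‖ ≤ ∑ i ∈ F, ‖(ε i - γ i) • v i‖ := hsum ▸ norm_sum_le _ _
    _ ≤ #F * (2 * δ) := by simpa using sum_le_sum fun i (_ : i ∈ F) => hterm i
    _ ≤ finrank ℝ E * (2 * δ) := by gcongr; exact_mod_cast hγ.card_fractional_le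
    _ = 2 * finrank ℝ E * δ := by ring

section Blocks

variable {N : ℕ → ℕ} (hN : StrictMono N)

/-- The `k` with `N k ≤ m < N (k + 1)`; it is `0` when `m < N 0`. -/
def blockIndex (m : ℕ) : ℕ := Nat.find (⟨m, hN.id_le (m + 1)⟩ : ∃ k, m < N (k + 1))

theorem lt_blockIndex_succ (m : ℕ) : m < N (blockIndex hN m + 1) :=
  Nat.find_spec (⟨m, hN.id_le (m + 1)⟩ : ∃ k, m < N (k + 1))

theorem blockIndex_le {m : ℕ} (hm : N 0 ≤ m) : N (blockIndex hN m) ≤ m := by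
  rcases h : blockIndex hN m with _ | k
  · exact hm
  · exact not_lt.1 <| Nat.find_min (⟨m, hN.id_le (m + 1)⟩ : ∃ k, m < N (k + 1))
      (m := k) (by unfold blockIndex at h; omega)

theorem blockIndex_eq {k m : ℕ} (h₁ : N k ≤ m) (h₂ : m < N (k + 1)) : blockIndex hN m = k :=
  (Nat.find_eq_iff _).2 ⟨h₂, fun _ hj => not_lt.2 ((hN.monotone hj).trans h₁)⟩

end Blocks

theorem tendsto_of_tendsto_comp_of_dist_le {X : Type*} [PseudoMetricSpace X] {S : ℕ → X}
    {N : ℕ → ℕ} (hN : StrictMono N) {r : ℕ → ℝ} (hr : Tendsto r atTop (𝓝 0))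
    (hS : ∀ k m, N k ≤ m → m < N (k + 1) → dist (S m) (S (N k)) ≤ r k) {l : X}
    (hl : Tendsto (S ∘ N) atTop (𝓝 l)) : Tendsto S atTop (𝓝 l) := by
  have hb : Tendsto (blockIndex hN) atTop atTop := tendsto_atTop_atTop.2 fun K =>
    ⟨N K, fun m hm => Nat.lt_succ_iff.1 (hN.lt_iff_lt.1 (hm.trans_lt (lt_blockIndex_succ hN m)))⟩
  have hdist : ∀ᶠ m in atTop,
      dist (S m) l ≤ r (blockIndex hN m) + dist (S (N (blockIndex hN m))) l :=
    eventually_atTop.2 ⟨N 0, fun m hm => (dist_triangle _ _ _).trans <| add_le_add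
      (hS _ m (blockIndex_le hN hm) (lt_blockIndex_succ hN m)) le_rfl⟩
  rw [tendsto_iff_dist_tendsto_zero] at hl ⊢
  refine squeeze_zero' (Eventually.of_forall fun _ => dist_nonneg) hdist ?_
  exact add_zero (0 : ℝ) ▸ (hr.add hl).comp hb

theorem exists_signs_tendsto_sum_range_of_tendsto_zero {E : Type*} [NormedAddCommGroup E]
    [NormedSpace ℝ E] [FiniteDimensional ℝ E] {a : ℕ → E} (ha : Tendsto a atTop (𝓝 0)) :
    ∃ ε : ℕ → ℝ, (∀ i, ε i = 1 ∨ ε i = -1) ∧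
      ∃ l, Tendsto (fun n => ∑ i ∈ range n, ε i • a i) atTop (𝓝 l) := by
  have := FiniteDimensional.complete ℝ E
  set C : ℝ := 2 * finrank ℝ E
  obtain ⟨N, hN, hNa⟩ : ∃ N : ℕ → ℕ, StrictMono N ∧ ∀ k, ∀ i ≥ N k, ‖a i‖ ≤ (2⁻¹ : ℝ) ^ k := by
    refine extraction_forall_of_eventually'
      (P := fun k n => ∀ i ≥ n, ‖a i‖ ≤ (2⁻¹ : ℝ) ^ k) fun k => ?_
    obtain ⟨M, hM⟩ := eventually_atTop.1 <|
      NormedAddGroup.tendsto_nhds_zero.1 ha ((2⁻¹ : ℝ) ^ k) (by positivity)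
    exact ⟨M, fun n hn i hi => (hM i (hn.trans hi)).le⟩
  choose σ hσ hσsum using fun k => exists_signs_norm_sum_range_le (fun i => a (N k + i))
    (N (k + 1) - N k) fun i => hNa k _ (Nat.le_add_right _ _)
  set ε : ℕ → ℝ := fun i => σ (blockIndex hN i) (i - N (blockIndex hN i))
  set S : ℕ → E := fun n => ∑ i ∈ range n, ε i • a i
  have hblock : ∀ k m, N k ≤ m → m ≤ N (k + 1) → dist (S m) (S (N k)) ≤ C * 2⁻¹ ^ k := by
    intro k m h₁ h₂
    have hε : ∀ j ∈ range (m - N k), ε (N k + j) • a (N k + j) = σ k j • a (N k + j) :=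
      fun j hj => by
        rw [mem_range] at hj
        simp only [ε, blockIndex_eq hN (Nat.le_add_right _ j) (by omega : N k + j < N (k + 1)),
          Nat.add_sub_cancel_left]
    rw [dist_eq_norm, ← sum_Ico_eq_sub _ h₁, sum_Ico_eq_sum_range, sum_congr rfl hε]
    exact hσsum k (m - N k) (by omega)
  have hcauchy : CauchySeq (S ∘ N) := cauchySeq_of_le_geometric 2⁻¹ C (by norm_num) fun k => by
    rw [dist_comm]
    exact hblock k _ (hN.monotone k.le_succ) le_rfl
  obtain ⟨l, hl⟩ := cauchySeq_tendsto_of_complete hcauchy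
  refine ⟨ε, fun i => hσ _ _, l, tendsto_of_tendsto_comp_of_dist_le hN ?_
    (fun k m h₁ h₂ => hblock k m h₁ h₂.le) hl⟩
  simpa using (tendsto_pow_atTop_nhds_zero_of_lt_one (r := (2⁻¹ : ℝ)) (by norm_num)
    (by norm_num)).const_mul C

theorem stmt7 (a : ℕ → EuclideanSpace ℝ (Fin 2))
    (h : ∀ ε : ℕ → ℝ, (∀ i, ε i = 1 ∨ ε i = -1) →
      ¬ ∃ l, Tendsto (fun N => ∑ i ∈ Finset.range N, ε i • a i) atTop (nhds l)) :
    ¬ Tendsto (fun n => ‖a n‖) atTop (nhds 0) := by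
  intro ha
  obtain ⟨ε, hε, hconv⟩ :=
    exists_signs_tendsto_sum_range_of_tendsto_zero (tendsto_zero_iff_norm_tendsto_zero.2 ha)
  exact h ε hε hconv
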